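/- Distribution-only conditional lower bound for Ψ(t) = −log t with expert-error costs (from the proof of Theorem 4.2, logistic case): let Ψ(t) = −log t and suppose the costs are c_y = 1_{y≠g} for some fixed g ∈ [n]. Let i ∈ [n] satisfy i ≠ g, p_i = max_{y∈[n]} p_y, h_i = max_{y∈[n]} h_y, and h_i ≤ h_{n+1}. Then ΔC_Ψ(h) ≥ p_i·log( 2p_i/(p_i + p_g) ) + p_g·log( 2p_g/(p_i + p_g) ) (with the conventions 0·log 0 = 0 and right-hand side equal to 0 when p_i + p_g = 0). -/
import Mathlib


open Real

/-- Softmax of a score vector. -/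
noncomputable def smax {m : ℕ} (v : Fin m → ℝ) (y : Fin m) : ℝ :=
  Real.exp (v y) / ∑ y' : Fin m, Real.exp (v y')

/-- Conditional RL2D error `C_Ψ(h) = Σ_y [ q_y Ψ(s_y) + (p_y − q_y) Ψ(s_y + s_{n+1}) ]`
with `q_y = p_y c_y`; label `Fin.last n` is the deferral label. -/
noncomputable def condC {n : ℕ} (Ψ : ℝ → ℝ) (p c : Fin n → ℝ) (v : Fin (n + 1) → ℝ) : ℝ :=
  ∑ y : Fin n, (p y * c y * Ψ (smax v y.castSucc)
    + (p y - p y * c y) * Ψ (smax v y.castSucc + smax v (Fin.last n)))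

/-- Conditional regret `ΔC_Ψ(h) = C_Ψ(h) − inf_{h'} C_Ψ(h')`. -/
noncomputable def condRegret {n : ℕ} (Ψ : ℝ → ℝ) (p c : Fin n → ℝ)
    (v : Fin (n + 1) → ℝ) : ℝ :=
  condC Ψ p c v - ⨅ v' : Fin (n + 1) → ℝ, condC Ψ p c v'

/-- `P(k)`: `p_k` for `k ∈ [n]` and `p_{n+1} = Σ_y p_y (1 − c_y)` for the deferral label. -/
noncomputable def Pfull {n : ℕ} (p c : Fin n → ℝ) (k : Fin (n + 1)) : ℝ :=
  if h : k = Fin.last n then ∑ y : Fin n, p y * (1 - c y) else p (k.castPred h)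

/-- Conditional deferral regret `ΔC_def = max{max_y p_y, p_{n+1}} − P(k)`. -/
noncomputable def defRegret {n : ℕ} (p c : Fin n → ℝ) (k : Fin (n + 1)) : ℝ :=
  max (⨆ y : Fin n, p y) (∑ y : Fin n, p y * (1 - c y)) - Pfull p c k

section AuxRL2D
open Filter
lemma gibbs_pt (a b : ℝ) (ha : 0 ≤ a) (hb : 0 < b) :
    a * Real.log b ≤ a * Real.log a - a + b := by
  rcases eq_or_lt_of_le ha with h | h
  · simp [← h]; positivity
  · have h1 : Real.log (b / a) ≤ b / a - 1 :=
      Real.log_le_sub_one_of_pos (by positivity)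
    have h2 : Real.log (b / a) = Real.log b - Real.log a := Real.log_div hb.ne' h.ne'
    have h3 : a * (b / a) = b := by field_simp
    nlinarith [mul_le_mul_of_nonneg_left h1 ha]

lemma sum_exp_pos {m : ℕ} [NeZero m] (v : Fin m → ℝ) :
    (0:ℝ) < ∑ j : Fin m, Real.exp (v j) :=
  Finset.sum_pos (fun _ _ => Real.exp_pos _) Finset.univ_nonempty

lemma smax_pos {m : ℕ} [NeZero m] (v : Fin m → ℝ) (k : Fin m) : 0 < smax v k :=
  div_pos (Real.exp_pos _) (sum_exp_pos v)

lemma sum_smax {m : ℕ} [NeZero m] (v : Fin m → ℝ) : ∑ k, smax v k = 1 := by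
  simp [smax, ← Finset.sum_div, div_self (sum_exp_pos v).ne']

lemma smax_le_smax {m : ℕ} [NeZero m] (v : Fin m → ℝ) {j k : Fin m} (h : v j ≤ v k) :
    smax v j ≤ smax v k := by
  have := sum_exp_pos v
  unfold smax
  gcongr

lemma sum_split {n : ℕ} (f : Fin n → ℝ) (i g : Fin n) (hig : i ≠ g) :
    ∑ y : Fin n, f y = (∑ y ∈ Finset.univ \ {i, g}, f y) + (f i + f g) := by
  rw [← Finset.sum_pair hig, Finset.sum_sdiff (Finset.subset_univ _)]

-- bracket inequality
lemma bracket (pi pg si u : ℝ) (hpg : 0 ≤ pg) (hpig : pg ≤ pi)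
    (hsi : 0 < si) (hu : 0 < u) (hsiu : si ≤ u) :
    (pi + pg) * (-Real.log ((si + u) / 2)) ≤ pi * (-Real.log si) + pg * (-Real.log u) := by
  set m := si + u with hm
  have hm2 : 0 < m / 2 := by positivity
  have hα : 0 ≤ Real.log (m / 2) - Real.log si := by
    have : si ≤ m / 2 := by rw [hm]; linarith
    linarith [Real.log_le_log hsi this]
  have hαβ : 0 ≤ (Real.log (m / 2) - Real.log si) + (Real.log (m / 2) - Real.log u) := by
    have h1 : si * u ≤ (m / 2) * (m / 2) := by rw [hm]; nlinarith
    have h2 : Real.log (si * u) ≤ Real.log ((m / 2) * (m / 2)) :=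
      Real.log_le_log (by positivity) h1
    rw [Real.log_mul hsi.ne' hu.ne', Real.log_mul hm2.ne' hm2.ne'] at h2
    linarith
  nlinarith [mul_nonneg (sub_nonneg.2 hpig) hα, mul_nonneg hpg hαβ]


lemma condC_simp {n : ℕ} (Ψ : ℝ → ℝ) (p : Fin n → ℝ) (g : Fin n) (v : Fin (n+1) → ℝ) :
    condC Ψ p (fun y => if y = g then 0 else 1) v =
      ∑ y : Fin n, (if y = g then p g * Ψ (smax v g.castSucc + smax v (Fin.last n))
        else p y * Ψ (smax v y.castSucc)) := by
  unfold condC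
  refine Finset.sum_congr rfl fun y _ => ?_
  by_cases h : y = g <;> simp [h]

lemma C_lower {n : ℕ} (p : Fin n → ℝ)
    (hp0 : ∀ y, 0 ≤ p y) (hp1 : ∑ y : Fin n, p y = 1) (g : Fin n)
    (v : Fin (n + 1) → ℝ) (i : Fin n) (hig : i ≠ g)
    (hpi : ∀ y : Fin n, p y ≤ p i)
    (hvlast : v i.castSucc ≤ v (Fin.last n)) :
    (∑ y ∈ Finset.univ \ ({i, g} : Finset (Fin n)), p y * (-Real.log (p y)))
      + (p i + p g) * (Real.log 2 - Real.log (p i + p g)) ≤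
    condC (fun t => -Real.log t) p (fun y => if y = g then 0 else 1) v := by
  set s : Fin (n+1) → ℝ := smax v with hs
  have hspos : ∀ k, 0 < s k := smax_pos v
  set si := s i.castSucc with hsi
  set u := s g.castSucc + s (Fin.last n) with hu
  set m := si + u with hmdef
  have hsipos : 0 < si := hspos _
  have hupos : 0 < u := by have := hspos g.castSucc; have := hspos (Fin.last n); rw [hu]; linarith
  have hmpos : 0 < m := by rw [hmdef]; linarith
  have hsiu : si ≤ u := by
    have h1 : si ≤ s (Fin.last n) := smax_le_smax v hvlast
    have := hspos g.castSucc
    rw [hu]; linarith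
  -- rewrite condC
  rw [condC_simp, sum_split _ i g hig]
  have hterm : ∀ y ∈ Finset.univ \ ({i, g} : Finset (Fin n)),
      (if y = g then p g * (-Real.log (smax v g.castSucc + smax v (Fin.last n)))
        else p y * (-Real.log (smax v y.castSucc)))
      = p y * (-Real.log (s y.castSucc)) := by
    intro y hy
    rw [Finset.mem_sdiff, Finset.mem_insert, Finset.mem_singleton] at hy
    push_neg at hy
    simp [hy.2.2, hs]
  rw [Finset.sum_congr rfl hterm]
  have hif_i : (if i = g then p g * (-Real.log (smax v g.castSucc + smax v (Fin.last n)))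
        else p i * (-Real.log (smax v i.castSucc))) = p i * (-Real.log si) := by
    simp [hig, hsi, hs]
  have hif_g : (if g = g then p g * (-Real.log (smax v g.castSucc + smax v (Fin.last n)))
        else p g * (-Real.log (smax v g.castSucc))) = p g * (-Real.log u) := by
    simp [hu, hs]
  rw [hif_i, hif_g]
  -- bracket step
  have hbr := bracket (p i) (p g) si u (hp0 g) (hpi g) hsipos hupos hsiu
  -- gibbs per coordinate
  have hgib : ∀ y ∈ Finset.univ \ ({i, g} : Finset (Fin n)),
      p y * (-Real.log (p y)) + p y - s y.castSucc ≤ p y * (-Real.log (s y.castSucc)) := by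
    intro y _
    have := gibbs_pt (p y) (s y.castSucc) (hp0 y) (hspos _)
    linarith
  have hsum_gib := Finset.sum_le_sum hgib
  -- gibbs merged
  have hgibm : (p i + p g) * (-Real.log (p i + p g)) + (p i + p g) - m
      ≤ (p i + p g) * (-Real.log m) := by
    have := gibbs_pt (p i + p g) m (by have := hp0 i; have := hp0 g; linarith) hmpos
    linarith
  -- log(m/2) = log m - log 2
  have hlog2 : Real.log (m / 2) = Real.log m - Real.log 2 :=
    Real.log_div hmpos.ne' two_ne_zero
  -- mass identities
  have hpsum : (∑ y ∈ Finset.univ \ ({i, g} : Finset (Fin n)), p y) + (p i + p g) = 1 := by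
    rw [sum_split p i g hig] at hp1; linarith
  have hssum : (∑ y ∈ Finset.univ \ ({i, g} : Finset (Fin n)), s y.castSucc) + m = 1 := by
    have h1 : (∑ y : Fin n, s y.castSucc) + s (Fin.last n) = 1 := by
      rw [← Fin.sum_univ_castSucc (f := s)]; exact sum_smax v
    rw [sum_split (fun y => s y.castSucc) i g hig] at h1
    rw [hmdef, hsi, hu]; linarith
  -- combine
  have hsum_diff : (∑ y ∈ Finset.univ \ ({i, g} : Finset (Fin n)),
      (p y * (-Real.log (p y)) + p y - s y.castSucc))
      = (∑ y ∈ Finset.univ \ ({i, g} : Finset (Fin n)), p y * (-Real.log (p y)))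
        + (∑ y ∈ Finset.univ \ ({i, g} : Finset (Fin n)), p y)
        - (∑ y ∈ Finset.univ \ ({i, g} : Finset (Fin n)), s y.castSucc) := by
    rw [Finset.sum_sub_distrib, Finset.sum_add_distrib]
  rw [hsum_diff] at hsum_gib
  have hml : (p i + p g) * (-Real.log (m/2)) = (p i + p g) * (-Real.log m) + (p i + p g) * Real.log 2 := by
    rw [hlog2]; ring
  nlinarith [hsum_gib, hbr, hgibm]

lemma tends_aux (c k K : ℝ) (hc : 0 < c) :
    Tendsto (fun δ : ℝ => Real.log (1 + K * δ) - Real.log (c + k * δ))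
      (nhdsWithin 0 (Set.Ioi 0)) (nhds (-Real.log c)) := by
  have h1 : ContinuousAt (fun δ : ℝ => Real.log (1 + K * δ) - Real.log (c + k * δ)) 0 := by
    apply ContinuousAt.sub
    · exact (Real.continuousAt_log (by norm_num)).comp (by fun_prop)
    · exact (Real.continuousAt_log (by simpa using hc.ne')).comp (by fun_prop)
  have h2 := h1.tendsto.mono_left (nhdsWithin_le_nhds (s := Set.Ioi 0))
  simpa using h2

lemma sum_exp_pos' {m : ℕ} [NeZero m] (v : Fin m → ℝ) :
    (0:ℝ) < ∑ j : Fin m, Real.exp (v j) :=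
  Finset.sum_pos (fun _ _ => Real.exp_pos _) Finset.univ_nonempty

lemma smax_pos' {m : ℕ} [NeZero m] (v : Fin m → ℝ) (k : Fin m) : 0 < smax v k :=
  div_pos (Real.exp_pos _) (sum_exp_pos' v)

lemma smax_le_one {m : ℕ} [NeZero m] (v : Fin m → ℝ) (k : Fin m) : smax v k ≤ 1 := by
  rw [smax, div_le_one (sum_exp_pos' v)]
  exact Finset.single_le_sum (fun j _ => (Real.exp_pos (v j)).le) (Finset.mem_univ k)

lemma smax_pair_le_one {m : ℕ} [NeZero m] (v : Fin m → ℝ) {a b : Fin m} (hab : a ≠ b) :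
    smax v a + smax v b ≤ 1 := by
  have h1 : ∑ k ∈ ({a, b} : Finset (Fin m)), smax v k ≤ ∑ k, smax v k := by
    apply Finset.sum_le_sum_of_subset_of_nonneg (Finset.subset_univ _)
    exact fun k _ _ => (smax_pos' v k).le
  rw [Finset.sum_pair hab] at h1
  have h2 : ∑ k, smax v k = 1 := by
    simp [smax, ← Finset.sum_div, div_self (sum_exp_pos' v).ne']
  linarith

lemma condC_nonneg {n : ℕ} (p : Fin n → ℝ) (hp0 : ∀ y, 0 ≤ p y) (g : Fin n)
    (v : Fin (n + 1) → ℝ) :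
    0 ≤ condC (fun t => -Real.log t) p (fun y => if y = g then 0 else 1) v := by
  apply Finset.sum_nonneg
  intro y _
  have hlast : (y.castSucc : Fin (n+1)) ≠ Fin.last n := (Fin.castSucc_lt_last y).ne
  have h1 : 0 ≤ -Real.log (smax v y.castSucc) := by
    simpa using Real.log_nonpos (smax_pos' v _).le (smax_le_one v _)
  have h2 : 0 ≤ -Real.log (smax v y.castSucc + smax v (Fin.last n)) := by
    have := smax_pos' v y.castSucc
    have := smax_pos' v (Fin.last n)
    simpa using Real.log_nonpos (by linarith) (smax_pair_le_one v hlast)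
  by_cases h : y = g
  · subst h; simp only [if_pos rfl]
    have : (if True then (0:ℝ) else 1) = 0 := if_pos trivial
    simp
    nlinarith [mul_nonneg (hp0 y) h2]
  · simp only [if_neg h]
    simp
    nlinarith [mul_nonneg (hp0 y) h1]

lemma condC_simp' {n : ℕ} (Ψ : ℝ → ℝ) (p : Fin n → ℝ) (g : Fin n) (v : Fin (n+1) → ℝ) :
    condC Ψ p (fun y => if y = g then 0 else 1) v =
      ∑ y : Fin n, (if y = g then p g * Ψ (smax v g.castSucc + smax v (Fin.last n))
        else p y * Ψ (smax v y.castSucc)) := by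
  unfold condC
  refine Finset.sum_congr rfl fun y _ => ?_
  by_cases h : y = g <;> simp [h]

lemma inf_le_H {n : ℕ} [NeZero n] (p : Fin n → ℝ)
    (hp0 : ∀ y, 0 ≤ p y) (hp1 : ∑ y : Fin n, p y = 1) (g : Fin n) :
    (⨅ v' : Fin (n + 1) → ℝ, condC (fun t => -Real.log t) p (fun y => if y = g then 0 else 1) v')
      ≤ ∑ y : Fin n, (if y = g then p g * (-Real.log (p g)) else p y * (-Real.log (p y))) := by
  set c : Fin n → ℝ := fun y => if y = g then 0 else 1 with hc
  have hbdd : BddBelow (Set.range fun v' : Fin (n+1) → ℝ => condC (fun t => -Real.log t) p c v') :=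
    ⟨0, by rintro x ⟨v', rfl⟩; exact condC_nonneg p hp0 g v'⟩
  -- the probability vector q on Fin (n+1)
  set q : Fin (n+1) → ℝ := Fin.snoc (fun y => if y = g then p g / 2 else p y) (p g / 2) with hq
  have hq0 : ∀ k, 0 ≤ q k := by
    intro k
    induction k using Fin.lastCases with
    | last => simp [hq]; linarith [hp0 g]
    | cast y =>
      simp only [hq, Fin.snoc_castSucc]
      by_cases h : y = g <;> simp [h] <;> [linarith [hp0 g]; exact hp0 y]
  have hqsum : ∑ k, q k = 1 := by
    rw [Fin.sum_univ_castSucc]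
    simp only [hq, Fin.snoc_castSucc, Fin.snoc_last]
    have : ∑ y : Fin n, (if y = g then p g / 2 else p y)
        = (∑ y : Fin n, p y) - p g / 2 := by
      have he : ∀ y : Fin n, (if y = g then p g / 2 else p y)
          = p y - (if y = g then p g / 2 else 0) := by
        intro y; by_cases h : y = g <;> simp [h] <;> ring
      rw [Finset.sum_congr rfl fun y _ => he y, Finset.sum_sub_distrib,
        Finset.sum_ite_eq' Finset.univ g fun _ => p g / 2]
      simp
    rw [this, hp1]; ring
  -- the approximating scores
  have key : ∀ δ : ℝ, 0 < δ →
      condC (fun t => -Real.log t) p c (fun k => Real.log (q k + δ)) =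
      ∑ y : Fin n, (if y = g then
          p g * (Real.log (1 + (n+1)*δ) - Real.log (p g + 2*δ))
        else p y * (Real.log (1 + (n+1)*δ) - Real.log (p y + δ))) := by
    intro δ hδ
    set w : Fin (n+1) → ℝ := fun k => Real.log (q k + δ) with hw
    have hexp : ∀ k, Real.exp (w k) = q k + δ := fun k =>
      Real.exp_log (by linarith [hq0 k])
    have hS : ∑ k, Real.exp (w k) = 1 + (n+1) * δ := by
      simp only [hexp]
      rw [Finset.sum_add_distrib, hqsum, Finset.sum_const, Finset.card_univ,
        Fintype.card_fin, nsmul_eq_mul]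
      push_cast; ring
    have hSpos : (0:ℝ) < 1 + (n+1) * δ := by positivity
    have hsm : ∀ k, smax w k = (q k + δ) / (1 + (n+1)*δ) := by
      intro k; rw [smax, hS, hexp]
    rw [condC_simp']
    refine Finset.sum_congr rfl fun y _ => ?_
    by_cases h : y = g
    · subst h
      rw [if_pos rfl, if_pos rfl, hsm, hsm]
      have h1 : q y.castSucc = p y / 2 := by simp [hq]
      have h2 : q (Fin.last n) = p y / 2 := by simp [hq]
      rw [h1, h2]
      have h3 : (p y / 2 + δ) / (1 + (n+1)*δ) + (p y / 2 + δ) / (1 + (n+1)*δ)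
          = (p y + 2*δ) / (1 + (n+1)*δ) := by field_simp; ring
      rw [h3, Real.log_div (by linarith [hp0 y]) hSpos.ne']
      ring
    · rw [if_neg h, if_neg h, hsm]
      have h1 : q y.castSucc = p y := by simp [hq, h]
      rw [h1, Real.log_div (by linarith [hp0 y]) hSpos.ne']
      ring
  -- tendsto
  have htend : Tendsto (fun δ : ℝ => ∑ y : Fin n, (if y = g then
          p g * (Real.log (1 + (n+1)*δ) - Real.log (p g + 2*δ))
        else p y * (Real.log (1 + (n+1)*δ) - Real.log (p y + δ))))
      (nhdsWithin 0 (Set.Ioi 0))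
      (nhds (∑ y : Fin n, (if y = g then p g * (-Real.log (p g)) else p y * (-Real.log (p y))))) := by
    apply tendsto_finset_sum
    intro y _
    by_cases h : y = g
    · subst h
      simp only [eq_self_iff_true, if_true]
      rcases eq_or_lt_of_le (hp0 y) with h0 | h0
      · have : (fun δ : ℝ => p y * (Real.log (1 + (n+1)*δ) - Real.log (p y + 2*δ)))
            = fun _ => p y * (-Real.log (p y)) := by
          funext δ; rw [← h0]; ring
        rw [this]; exact tendsto_const_nhds
      · simpa using (tends_aux (p y) 2 (n+1) h0).const_mul (p y)
    · simp only [if_neg h]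
      rcases eq_or_lt_of_le (hp0 y) with h0 | h0
      · have : (fun δ : ℝ => p y * (Real.log (1 + (n+1)*δ) - Real.log (p y + δ)))
            = fun _ => p y * (-Real.log (p y)) := by
          funext δ; rw [← h0]; ring
        rw [this]; exact tendsto_const_nhds
      · have := (tends_aux (p y) 1 (n+1) h0).const_mul (p y)
        simpa [one_mul] using this
  -- conclude
  refine ge_of_tendsto htend ?_
  filter_upwards [self_mem_nhdsWithin] with δ hδ
  rw [← key δ hδ]
  exact ciInf_le hbdd _

end AuxRL2D

/-- distribution-only conditional lower bound for Ψ(t) = −log t with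
expert-error costs c_y = 1_{y≠g} (from the proof of Theorem 4.2, logistic case):
if i ≠ g, p_i = max_{y∈[n]} p_y, h_i = max_{y∈[n]} h_y and h_i ≤ h_{n+1}, then
ΔC_Ψ(h) ≥ p_i·log(2p_i/(p_i+p_g)) + p_g·log(2p_g/(p_i+p_g)).
(Lean's conventions 0·log 0 = 0 and log(0/0) = log 0 = 0 realize the stated
degenerate-case conventions.) -/
theorem distribution_lower_bound_log {n : ℕ} (hn : 2 ≤ n) (p : Fin n → ℝ)
    (hp0 : ∀ y, 0 ≤ p y) (hp1 : ∑ y : Fin n, p y = 1) (g : Fin n)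
    (v : Fin (n + 1) → ℝ) (i : Fin n) (hig : i ≠ g)
    (hpi : ∀ y : Fin n, p y ≤ p i)
    (hvi : ∀ y : Fin n, v y.castSucc ≤ v i.castSucc)
    (hvlast : v i.castSucc ≤ v (Fin.last n)) :
    condRegret (fun t => -Real.log t) p (fun y => if y = g then 0 else 1) v ≥
      p i * Real.log (2 * p i / (p i + p g)) +
        p g * Real.log (2 * p g / (p i + p g)) := by
  have : NeZero n := ⟨by omega⟩
  have hC := C_lower p hp0 hp1 g v i hig hpi hvlast
  have hI := inf_le_H p hp0 hp1 g
  have hH : ∑ y : Fin n, (if y = g then p g * (-Real.log (p g)) else p y * (-Real.log (p y)))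
      = (∑ y ∈ Finset.univ \ ({i, g} : Finset (Fin n)), p y * (-Real.log (p y)))
        + (p i * (-Real.log (p i)) + p g * (-Real.log (p g))) := by
    rw [sum_split (fun y => if y = g then p g * (-Real.log (p g)) else p y * (-Real.log (p y)))
      i g hig]
    congr 1
    · refine Finset.sum_congr rfl fun y hy => ?_
      rw [Finset.mem_sdiff, Finset.mem_insert, Finset.mem_singleton] at hy
      push_neg at hy
      rw [if_neg hy.2.2]
    · rw [if_neg hig, if_pos rfl]
  rw [hH] at hI
  rw [condRegret, ge_iff_le]
  have hE : (p i + p g) * (Real.log 2 - Real.log (p i + p g))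
        - (p i * (-Real.log (p i)) + p g * (-Real.log (p g)))
      = p i * Real.log (2 * p i / (p i + p g)) + p g * Real.log (2 * p g / (p i + p g)) := by
    rcases eq_or_lt_of_le (hp0 i) with hi0 | hi0
    · have hg0 : p g = 0 := le_antisymm (hi0 ▸ hpi g) (hp0 g)
      rw [← hi0, hg0]; simp
    · rcases eq_or_lt_of_le (hp0 g) with hg0 | hg0
      · rw [← hg0]
        have h2 : 2 * p i / (p i + 0) = 2 := by
          rw [add_zero, mul_div_assoc, div_self hi0.ne', mul_one]
        rw [h2]
        simp
        ring
      · have hs : (0:ℝ) < p i + p g := by linarith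
        rw [Real.log_div (by positivity) hs.ne', Real.log_div (by positivity) hs.ne',
          Real.log_mul two_ne_zero hi0.ne', Real.log_mul two_ne_zero hg0.ne']
        ring
  linarith
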